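/- Let σ be a sphere in ℝ³ centered at p with radius ρ, let ℓ be a line in ℝ³ not parallel to the z-axis, let V_ℓ be the vertical plane (containing the z-direction) containing ℓ, and suppose p lies strictly above the plane H_ℓ that contains ℓ and is orthogonal to V_ℓ. Then ℓ intersects σ (i.e., dist(p, ℓ) ≤ ρ) if and only if (i) the xy-projection of ℓ intersects the xy-projection of σ (a disk of radius ρ) and (ii) ℓ lies (weakly) above the line ℓ⁻ that is contained in V_ℓ, is parallel to ℓ, and is tangent to σ from below. -/

import Mathlib

open RealInnerProductSpace

/-! Let `P` be the orthogonal projection onto `vᗮ` and `u = P (p - q)`. The distance from `p` to the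
line `q + ℝ v` is `‖u‖`, and since `P e₃ = n`, the distance from `p` to the lowered line
`q + s e₃ + ℝ v` is `‖u - s n‖`; that `p` lies above `H_ℓ` means `0 < ⟪u, n⟫`. For `s ≤ 0` this
gives `‖u - s n‖² ≥ ‖u‖²`, so a tangent line below `ℓ` forces `‖u‖ ≤ ρ`. Conversely, if `‖u‖ ≤ ρ`
then `s ↦ ‖u - s n‖` grows from `‖u‖` at `s = 0` to `∞` as `s → -∞`, so it takes the value `ρ`
at some `s ≤ 0`. -/

section InnerProductSpace

variable {E : Type*} [NormedAddCommGroup E] [InnerProductSpace ℝ E]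

theorem exists_sub_eq_starProjection_orthogonal_singleton (p q v : E) :
    ∃ t : ℝ, p - (q + t • v) = (ℝ ∙ v)ᗮ.starProjection (p - q) := by
  obtain ⟨t, ht⟩ := Submodule.mem_span_singleton.1 ((ℝ ∙ v).starProjection_apply_mem (p - q))
  exact ⟨t, by rw [Submodule.starProjection_orthogonal_val, ht, sub_add_eq_sub_sub]⟩

theorem infDist_line_eq_norm_starProjection (p q v : E) :
    Metric.infDist p {x : E | ∃ t : ℝ, x = q + t • v} = ‖(ℝ ∙ v)ᗮ.starProjection (p - q)‖ := by
  apply le_antisymm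
  · obtain ⟨t, ht⟩ := exists_sub_eq_starProjection_orthogonal_singleton p q v
    rw [← ht, ← dist_eq_norm]
    exact Metric.infDist_le_dist_of_mem ⟨t, rfl⟩
  · have hne : {x : E | ∃ t : ℝ, x = q + t • v}.Nonempty := ⟨q, 0, by simp⟩
    rw [Metric.le_infDist hne]
    rintro _ ⟨t, rfl⟩
    have hshift : (ℝ ∙ v)ᗮ.starProjection (p - (q + t • v)) = (ℝ ∙ v)ᗮ.starProjection (p - q) := by
      rw [sub_add_eq_sub_sub, map_sub, map_smul,
        Submodule.starProjection_orthogonalComplement_singleton_eq_zero, smul_zero, sub_zero]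
    rw [dist_eq_norm, ← hshift]
    exact Submodule.norm_starProjection_apply_le _ _

theorem norm_le_iff_exists_nonpos_norm_sub_smul_eq {u n : E} (hun : 0 < ⟪u, n⟫) (ρ : ℝ) :
    ‖u‖ ≤ ρ ↔ ∃ s : ℝ, s ≤ 0 ∧ ‖u - s • n‖ = ρ := by
  have hexpand : ∀ s : ℝ, ‖u - s • n‖ ^ 2 = ‖u‖ ^ 2 - 2 * s * ⟪u, n⟫ + s ^ 2 * ‖n‖ ^ 2 := by
    intro s
    rw [norm_sub_sq_real, real_inner_smul_right, norm_smul, Real.norm_eq_abs, mul_pow, sq_abs]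
    ring
  constructor
  · intro hu
    have hn : 0 < ‖n‖ := norm_pos_iff.2 fun h => by simp [h] at hun
    have hρ : 0 ≤ ρ := (norm_nonneg u).trans hu
    set s₁ := -(ρ / ‖n‖)
    have hs₁ : s₁ ≤ 0 := neg_nonpos.2 (div_nonneg hρ hn.le)
    -- at `s₁` the term `s₁ ^ 2 * ‖n‖ ^ 2` alone is `ρ ^ 2`, and the cross term is nonnegative
    have hfar : ρ ≤ ‖u - s₁ • n‖ := by
      have hsq : ρ ^ 2 ≤ ‖u - s₁ • n‖ ^ 2 := by
        have : s₁ ^ 2 * ‖n‖ ^ 2 = ρ ^ 2 := by simp only [s₁]; field_simp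
        nlinarith [hexpand s₁, sq_nonneg ‖u‖, mul_nonpos_of_nonpos_of_nonneg hs₁ hun.le]
      exact abs_le_of_sq_le_sq' hsq (norm_nonneg _) |>.2
    have hcont : ContinuousOn (fun s : ℝ => ‖u - s • n‖) (Set.Icc s₁ 0) := by fun_prop
    obtain ⟨s, hs, hsρ⟩ := intermediate_value_Icc' hs₁ hcont ⟨by simpa using hu, hfar⟩
    exact ⟨s, hs.2, hsρ⟩
  · rintro ⟨s, hs, rfl⟩
    have hsq : ‖u‖ ^ 2 ≤ ‖u - s • n‖ ^ 2 := by
      nlinarith [hexpand s, sq_nonneg (s * ‖n‖), mul_nonpos_of_nonpos_of_nonneg hs hun.le]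
    exact abs_le_of_sq_le_sq' hsq (norm_nonneg _) |>.2

end InnerProductSpace

theorem sq_add_sq_le_norm_sq (x : EuclideanSpace ℝ (Fin 3)) : x 0 ^ 2 + x 1 ^ 2 ≤ ‖x‖ ^ 2 := by
  rw [EuclideanSpace.real_norm_sq_eq, Fin.sum_univ_three]
  nlinarith [sq_nonneg (x 2)]

theorem exists_sq_add_sq_le_norm_starProjection_sq (p q v : EuclideanSpace ℝ (Fin 3)) :
    ∃ t : ℝ, (q 0 + t * v 0 - p 0) ^ 2 + (q 1 + t * v 1 - p 1) ^ 2 ≤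
      ‖(ℝ ∙ v)ᗮ.starProjection (p - q)‖ ^ 2 := by
  obtain ⟨t, ht⟩ := exists_sub_eq_starProjection_orthogonal_singleton p q v
  refine ⟨t, ?_⟩
  calc (q 0 + t * v 0 - p 0) ^ 2 + (q 1 + t * v 1 - p 1) ^ 2
      = (p - (q + t • v)) 0 ^ 2 + (p - (q + t • v)) 1 ^ 2 := by
        simp only [PiLp.sub_apply, PiLp.add_apply, PiLp.smul_apply, smul_eq_mul]
        ring
    _ ≤ _ := ht ▸ sq_add_sq_le_norm_sq _

theorem stmt12_general (p q v e₃ n : EuclideanSpace ℝ (Fin 3)) (ρ : ℝ)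
    (he0 : e₃ 0 = 0) (he1 : e₃ 1 = 0) (he2 : e₃ 2 = 1)
    (hn : n = e₃ - (v 2 / ‖v‖ ^ 2) • v)
    (habove : 0 < ⟪p - q, n⟫) :
    Metric.infDist p {x : EuclideanSpace ℝ (Fin 3) | ∃ t : ℝ, x = q + t • v} ≤ ρ ↔
      ((∃ t : ℝ, (q 0 + t * v 0 - p 0) ^ 2 + (q 1 + t * v 1 - p 1) ^ 2 ≤ ρ ^ 2) ∧
        (∃ s : ℝ, s ≤ 0 ∧
          Metric.infDist p
            {x : EuclideanSpace ℝ (Fin 3) | ∃ t : ℝ, x = (q + s • e₃) + t • v} = ρ ∧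
          0 ≤ ⟪p - (q + s • e₃), n⟫)) := by
  set P := (ℝ ∙ v)ᗮ.starProjection with hP
  set u := P (p - q) with hu
  have hPe : P e₃ = n := by
    have hve : ⟪v, e₃⟫ = v 2 := by simp [PiLp.inner_apply, Fin.sum_univ_three, he0, he1, he2]
    rw [hn, Submodule.starProjection_orthogonal_val, Submodule.starProjection_singleton, hve]
    rfl
  have hlowered : ∀ s : ℝ, P (p - (q + s • e₃)) = u - s • n := fun s => by
    rw [sub_add_eq_sub_sub, map_sub, map_smul, hPe]
  have hinner : ∀ w, ⟪w, n⟫ = ⟪P w, n⟫ := fun w => by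
    rw [← hPe, Submodule.inner_starProjection_left_eq_right,
      Submodule.starProjection_eq_self_iff.2 (Submodule.starProjection_apply_mem _ _)]
  have hun : 0 < ⟪u, n⟫ := hinner (p - q) ▸ habove
  simp only [infDist_line_eq_norm_starProjection, ← hP, ← hu, hlowered]
  constructor
  · intro hρ
    obtain ⟨s, hs, hsρ⟩ := (norm_le_iff_exists_nonpos_norm_sub_smul_eq hun ρ).1 hρ
    obtain ⟨t, ht⟩ := exists_sq_add_sq_le_norm_starProjection_sq p q v
    refine ⟨⟨t, ht.trans (pow_le_pow_left₀ (norm_nonneg u) hρ 2)⟩, s, hs, hsρ, ?_⟩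
    rw [hinner, hlowered, inner_sub_left, real_inner_smul_left, real_inner_self_eq_norm_sq]
    exact sub_nonneg.2 ((mul_nonpos_of_nonpos_of_nonneg hs (sq_nonneg _)).trans hun.le)
  · rintro ⟨-, s, hs, hsρ, -⟩
    exact (norm_le_iff_exists_nonpos_norm_sub_smul_eq hun ρ).2 ⟨s, hs, hsρ⟩

/-- Mohaban–Sharir criterion: let `σ` be the sphere centered at `p` with radius
`ρ > 0`, `ℓ` the line through `q` with direction `v` not parallel to the
`z`-axis, `e₃` the vertical direction and `n = e₃ - (v₂/‖v‖²)v` the upward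
normal of the plane `H_ℓ` (the plane containing `ℓ` orthogonal to the vertical
plane `V_ℓ` of `ℓ`). If `p` lies strictly above `H_ℓ`, then `ℓ` meets `σ`
(i.e. `dist(p, ℓ) ≤ ρ`) iff (i) the `xy`-projections of `ℓ` and `σ` intersect
and (ii) `ℓ` lies weakly above the parallel line `ℓ⁻` in `V_ℓ` tangent to `σ`
from below — i.e. some parallel line `q + s•e₃ + ℝ•v` with `s ≤ 0` is at
distance exactly `ρ` from `p` with `p` on its upper side. -/
theorem stmt12 (p q v e₃ n : EuclideanSpace ℝ (Fin 3)) (ρ : ℝ) (hρ : 0 < ρ)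
    (hv : ¬(v 0 = 0 ∧ v 1 = 0)) (hvne : v ≠ 0)
    (he0 : e₃ 0 = 0) (he1 : e₃ 1 = 0) (he2 : e₃ 2 = 1)
    (hn : n = e₃ - (v 2 / ‖v‖ ^ 2) • v)
    (habove : 0 < ⟪p - q, n⟫) :
    Metric.infDist p {x : EuclideanSpace ℝ (Fin 3) | ∃ t : ℝ, x = q + t • v} ≤ ρ ↔
      ((∃ t : ℝ, (q 0 + t * v 0 - p 0) ^ 2 + (q 1 + t * v 1 - p 1) ^ 2 ≤ ρ ^ 2) ∧
        (∃ s : ℝ, s ≤ 0 ∧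
          Metric.infDist p
            {x : EuclideanSpace ℝ (Fin 3) | ∃ t : ℝ, x = (q + s • e₃) + t • v} = ρ ∧
          0 ≤ ⟪p - (q + s • e₃), n⟫)) :=
  stmt12_general p q v e₃ n ρ he0 he1 he2 hn habove
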